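/- Let Δ be a thin pure simplicial complex of rank n. If F is a flag determined by the vertex sequence x_0, x_1, ..., x_{n-1}, then T(F) is the flag determined by the vertex sequence x_1, ..., x_{n-1}, x_n, where x_n is the unique vertex distinct from x_0 such that {x_1,...,x_n} is a facet. -/

import Mathlib

open scoped Classical

variable {V : Type*}

/-- `C` is a facet (maximal face) of a pure rank-`n` complex: a face with `n` vertices. -/
def IsFacet (n : ℕ) (faces : Finset V → Prop) (C : Finset V) : Prop :=
  faces C ∧ C.card = n

/-- `faces` describes a thin pure simplicial complex of rank `n` over the vertex set `V`:
it is downward closed, every singleton is a face, every face has at most `n` vertices and is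
contained in a facet, and every ridge (face with `n - 1` vertices) lies in exactly two facets. -/
def IsThinComplex (n : ℕ) (faces : Finset V → Prop) : Prop :=
  (∀ v : V, faces {v}) ∧
  (∀ ⦃X Y : Finset V⦄, faces X → Y ⊆ X → faces Y) ∧
  (∀ ⦃X : Finset V⦄, faces X → X.card ≤ n) ∧
  (∀ ⦃X : Finset V⦄, faces X → ∃ C : Finset V, IsFacet n faces C ∧ X ⊆ C) ∧
  (∀ ⦃R : Finset V⦄, faces R → R.card = n - 1 →
    {C : Finset V | IsFacet n faces C ∧ R ⊆ C}.ncard = 2)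

/-- A flag, encoded by the ordered vertex sequence `x_0, …, x_{n-1}` determining it:
the chain of faces is `{x_0} ⊂ {x_0,x_1} ⊂ … ⊂ {x_0,…,x_{n-1}}`, the top being a facet. -/
def IsFlag (n : ℕ) (faces : Finset V → Prop) (F : List V) : Prop :=
  F.length = n ∧ F.Nodup ∧ faces F.toFinset

/-- `G = T(F)` for the zigzag operator `T = σ_{n-1} ∘ ⋯ ∘ σ_0`: if `F` is determined by the
vertex sequence `x_0, x_1, …, x_{n-1}`, then `T(F)` is determined by `x_1, …, x_{n-1}, y` with
`y ≠ x_0`. -/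
def TStep (n : ℕ) (faces : Finset V → Prop) (F G : List V) : Prop :=
  IsFlag n faces F ∧ IsFlag n faces G ∧
    ∃ y : V, G = F.tail ++ [y] ∧ F.head? ≠ some y

/-- A zigzag of length `l`: the orbit `F, T F, T² F, …` of the operator `T` on flags, recorded
as the sequence `i ↦ Tⁱ F`; it is `l`-periodic with `l` the minimal period. -/
def IsZigzag (n : ℕ) (faces : Finset V → Prop) (l : ℕ) (F : ℕ → List V) : Prop :=
  0 < l ∧ (∀ i : ℕ, TStep n faces (F i) (F (i + 1))) ∧ (∀ i : ℕ, F (i + l) = F i) ∧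
    ∀ m : ℕ, 0 < m → (∀ i : ℕ, F (i + m) = F i) → l ≤ m

/-- The set of flags of a zigzag together with those of its reverse zigzag; two zigzags are
identified (a zigzag is identified with its reverse, and with its cyclic shifts) exactly when
these sets coincide. -/
def ZigzagClass (F : ℕ → List V) : Set (List V) :=
  Set.range F ∪ Set.range fun i => (F i).reverse

/-- `G = σ_i(F)`: the flag `G` has the same `j`-faces as `F` for all `j ≠ i`, and a different
`i`-face (the `j`-face of the flag with vertex sequence `F` is `(F.take (j+1)).toFinset`). -/
def SigmaStep (n : ℕ) (faces : Finset V → Prop) (i : ℕ) (F G : List V) : Prop :=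
  IsFlag n faces F ∧ IsFlag n faces G ∧
    (∀ j : ℕ, j < n → j ≠ i → (G.take (j + 1)).toFinset = (F.take (j + 1)).toFinset) ∧
    (G.take (i + 1)).toFinset ≠ (F.take (i + 1)).toFinset

/-- `G = T_δ(F)` where `T_δ = σ_{δ(n-1)} ∘ ⋯ ∘ σ_{δ(0)}`. -/
def TDeltaStep (n : ℕ) (faces : Finset V → Prop) (δ : Equiv.Perm (Fin n))
    (F G : List V) : Prop :=
  ∃ c : ℕ → List V, c 0 = F ∧ c n = G ∧
    ∀ i : Fin n, SigmaStep n faces (δ i) (c i) (c (i + 1))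

/-- A generalized zigzag (δ-zigzag) of length `l`: the orbit of `T_δ` on flags. -/
def IsGenZigzag (n : ℕ) (faces : Finset V → Prop) (δ : Equiv.Perm (Fin n)) (l : ℕ)
    (F : ℕ → List V) : Prop :=
  0 < l ∧ (∀ i : ℕ, TDeltaStep n faces δ (F i) (F (i + 1))) ∧ (∀ i : ℕ, F (i + l) = F i) ∧
    ∀ m : ℕ, 0 < m → (∀ i : ℕ, F (i + m) = F i) → l ≤ m

/-- Adjacency in the facet-adjacency graph `Γ_{n-1}(Δ)`: two distinct facets meeting in a ridge. -/
def FacetAdj (n : ℕ) (faces : Finset V → Prop) (C D : Finset V) : Prop :=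
  IsFacet n faces C ∧ IsFacet n faces D ∧ C ≠ D ∧ (C ∩ D).card = n - 1

/-- `p 0, p 1, …, p m` is a path in the facet-adjacency graph. -/
def IsFacetPath (n : ℕ) (faces : Finset V → Prop) (m : ℕ) (p : ℕ → Finset V) : Prop :=
  ∀ i : ℕ, i < m → FacetAdj n faces (p i) (p (i + 1))

/-- The path distance in the facet-adjacency graph `Γ_{n-1}(Δ)`. -/
noncomputable def facetDist (n : ℕ) (faces : Finset V → Prop) (X Y : Finset V) : ℕ :=
  sInf {m : ℕ | ∃ p : ℕ → Finset V, p 0 = X ∧ p m = Y ∧ IsFacetPath n faces m p}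

/-- The complex is a chamber complex: the facet-adjacency graph is connected. -/
def ChamberConnected (n : ℕ) (faces : Finset V → Prop) : Prop :=
  ∀ C D : Finset V, IsFacet n faces C → IsFacet n faces D →
    ∃ (m : ℕ) (p : ℕ → Finset V), p 0 = C ∧ p m = D ∧ IsFacetPath n faces m p


/-!
Write `F = x₀ :: t`. Since `σ_i` changes only the `i`-face, the `j`-face of `T(F)` is the
`j`-face of `σ_j ⋯ σ_0 (F)`: it differs from the `j`-face `{x₀, …, x_j}` of `F`, yet lies in
its `(j+1)`-face. By induction on `j` this forces the `j`-th vertex of `T(F)` to be `x_{j+1}`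
for `j < n - 1`, and the last one to differ from `x₀`. Uniqueness of `x_n` is thinness: the
ridge `{x₁, …, x_{n-1}}` lies in only two facets, that of `F` and that of `T(F)`.
-/

theorem notMem_of_nodup_append_singleton {l : List V} {a : V} (h : (l ++ [a]).Nodup) :
    a ∉ l :=
  ((List.nodup_concat l a).mp (List.concat_eq_append ▸ h)).1

section ShiftedList
variable [DecidableEq V]

theorem toFinset_append_singleton (l : List V) (a : V) :
    (l ++ [a]).toFinset = insert a l.toFinset := by
  ext; simp

theorem take_eq_take_tail_of_toFinset_take {x : V} {t G : List V} (hG : G.Nodup) (j : ℕ)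
    (hjt : j ≤ t.length) (hjG : j ≤ G.length)
    (hne : ∀ i < j, (G.take (i + 1)).toFinset ≠ ((x :: t).take (i + 1)).toFinset)
    (hsub : ∀ i < j, (G.take (i + 1)).toFinset ⊆ ((x :: t).take (i + 2)).toFinset) :
    G.take j = t.take j := by
  induction j with
  | zero => simp
  | succ j ih =>
    have hGj : G.take (j + 1) = t.take j ++ [G[j]] := by
      rw [← List.take_append_getElem, ih (by omega) (by omega)
        (fun i hi => hne i (by omega)) (fun i hi => hsub i (by omega))]
    have hx : G[j] ≠ x := by
      rintro hgx
      apply hne j (by omega)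
      rw [hGj, hgx, toFinset_append_singleton, List.take_succ_cons, List.toFinset_cons]
    have hnot : G[j] ∉ t.take j :=
      notMem_of_nodup_append_singleton (hGj ▸ hG.sublist (List.take_sublist (j + 1) G))
    have hmem : G[j] ∈ ((x :: t).take (j + 2)).toFinset :=
      hsub j (by omega) (List.mem_toFinset.mpr (by simp [hGj]))
    rw [List.take_succ_cons, ← List.take_append_getElem (by omega : j < t.length)] at hmem
    simp only [List.toFinset_cons, List.toFinset_append, Finset.mem_insert, Finset.mem_union,
      List.mem_toFinset, List.not_mem_nil, or_false] at hmem
    obtain h | h | h := hmem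
    · exact absurd h hx
    · exact absurd h hnot
    · rw [hGj, ← List.take_append_getElem (by omega : j < t.length), h]

theorem exists_eq_append_of_toFinset_take {x : V} {t G : List V} (hG : G.Nodup)
    (hlen : G.length = t.length + 1)
    (hne : ∀ i < G.length, (G.take (i + 1)).toFinset ≠ ((x :: t).take (i + 1)).toFinset)
    (hsub : ∀ i < t.length, (G.take (i + 1)).toFinset ⊆ ((x :: t).take (i + 2)).toFinset) :
    ∃ y, G = t ++ [y] ∧ y ≠ x := by
  have htake := take_eq_take_tail_of_toFinset_take hG _ le_rfl (by omega)
    (fun i hi => hne i (by omega)) hsub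
  have hG : G = t ++ [G[t.length]] := by
    conv_lhs =>
      rw [← List.take_of_length_le (le_of_eq hlen), ← List.take_append_getElem (by omega)]
    rw [htake, List.take_length]
  refine ⟨_, hG, fun hx => hne t.length (by omega) ?_⟩
  rw [List.take_of_length_le (by omega), List.take_of_length_le (by simp), hG, hx,
    toFinset_append_singleton, List.toFinset_cons]

end ShiftedList

section SigmaChain
variable {n : ℕ} {faces : Finset V → Prop} {c : ℕ → List V}

theorem toFinset_take_sigmaChain_eq (hstep : ∀ i < n, SigmaStep n faces i (c i) (c (i + 1)))
    {j a b : ℕ} (hj : j < n) (hab : a ≤ b) (hbn : b ≤ n)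
    (hskip : ∀ i, a ≤ i → i < b → i ≠ j) :
    ((c b).take (j + 1)).toFinset = ((c a).take (j + 1)).toFinset := by
  induction b, hab using Nat.le_induction with
  | base => rfl
  | succ b hab ih =>
    rw [(hstep b (by omega)).2.2.1 j hj (hskip b hab (by omega)).symm,
      ih (by omega) fun i hi hib => hskip i hi (by omega)]

theorem toFinset_take_sigmaChain_ne (hstep : ∀ i < n, SigmaStep n faces i (c i) (c (i + 1)))
    {j : ℕ} (hj : j < n) : ((c n).take (j + 1)).toFinset ≠ ((c 0).take (j + 1)).toFinset := by
  rw [toFinset_take_sigmaChain_eq hstep hj (a := j + 1) (by omega) le_rfl (by omega),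
    ← toFinset_take_sigmaChain_eq hstep hj (a := 0) (b := j) (by omega) (by omega) (by omega)]
  exact (hstep j hj).2.2.2

theorem toFinset_take_sigmaChain_subset (hstep : ∀ i < n, SigmaStep n faces i (c i) (c (i + 1)))
    {j : ℕ} (hj : j + 1 < n) :
    ((c n).take (j + 1)).toFinset ⊆ ((c 0).take (j + 2)).toFinset := by
  rw [toFinset_take_sigmaChain_eq hstep (by omega) (a := j + 1) (by omega) le_rfl (by omega),
    ← toFinset_take_sigmaChain_eq hstep hj (a := 0) (b := j + 1) (by omega) (by omega)
      (by omega)]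
  intro v hv
  simp only [List.mem_toFinset] at hv ⊢
  exact (List.take_prefix_take_left (by omega)).subset hv

end SigmaChain

section ThinComplex
variable {n : ℕ} {faces : Finset V → Prop}

theorem IsFlag.isFacet_toFinset {F : List V} (hF : IsFlag n faces F) :
    IsFacet n faces F.toFinset :=
  ⟨hF.2.2, by rw [List.toFinset_card_of_nodup hF.2.1, hF.1]⟩

theorem IsThinComplex.mono (hΔ : IsThinComplex n faces) {X Y : Finset V} (hX : faces X)
    (hYX : Y ⊆ X) : faces Y :=
  hΔ.2.1 hX hYX

theorem IsThinComplex.ncard_facets_of_ridge (hΔ : IsThinComplex n faces) {R : Finset V}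
    (hR : faces R) (hRcard : R.card = n - 1) :
    {C : Finset V | IsFacet n faces C ∧ R ⊆ C}.ncard = 2 :=
  hΔ.2.2.2.2 hR hRcard

theorem IsThinComplex.pos (hΔ : IsThinComplex n faces) {X : Finset V} (hX : faces X) : 0 < n := by
  by_contra! hn
  obtain rfl : n = 0 := by omega
  have hempty : faces ∅ := hΔ.mono hX (Finset.empty_subset X)
  have hone : {C : Finset V | IsFacet 0 faces C ∧ ∅ ⊆ C} = {∅} := by
    ext C
    simp only [IsFacet, Finset.card_eq_zero, Finset.empty_subset, and_true, Set.mem_ofPred_eq,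
      Set.mem_singleton_iff]
    exact ⟨And.right, fun h => ⟨h ▸ hempty, h⟩⟩
  have := hΔ.ncard_facets_of_ridge hempty rfl
  rw [hone, Set.ncard_singleton] at this
  omega

theorem IsThinComplex.eq_of_isFacet_insert (hΔ : IsThinComplex n faces) {R : Finset V}
    (hR : faces R) (hRcard : R.card = n - 1) {x y z : V} (hxR : x ∉ R) (hyR : y ∉ R)
    (hyx : y ≠ x) (hzx : z ≠ x) (hx : IsFacet n faces (insert x R))
    (hy : IsFacet n faces (insert y R)) (hz : IsFacet n faces (insert z R)) : z = y := by
  by_contra hzy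
  have hthree : ({insert x R, insert y R, insert z R} : Set (Finset V)).ncard = 3 :=
    Set.ncard_eq_three.mpr ⟨_, _, _, fun h => hyx ((Finset.insert_inj hxR).mp h).symm,
      fun h => hzx ((Finset.insert_inj hxR).mp h).symm,
      fun h => hzy ((Finset.insert_inj hyR).mp h).symm, rfl⟩
  have hsub : ({insert x R, insert y R, insert z R} : Set (Finset V)) ⊆
      {C | IsFacet n faces C ∧ R ⊆ C} := by
    rintro C (rfl | rfl | rfl) <;> exact ⟨‹_›, Finset.subset_insert _ _⟩
  have htwo := hΔ.ncard_facets_of_ridge hR hRcard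
  have hle := Set.ncard_le_ncard hsub (Set.finite_of_ncard_ne_zero (by omega))
  omega

end ThinComplex

/-- If `F` is the flag determined by the vertex sequence `x_0, …, x_{n-1}` and
`G = T(F) = σ_{n-1}(⋯(σ_0(F))⋯)`, then `G` is the flag determined by `x_1, …, x_{n-1}, x_n`,
where `x_n` is the unique vertex distinct from `x_0` such that `{x_1, …, x_n}` is a facet. -/
theorem stmt2 (n : ℕ) (faces : Finset V → Prop) (hΔ : IsThinComplex n faces)
    (F G : List V) (hF : IsFlag n faces F)
    (c : ℕ → List V) (hc0 : c 0 = F) (hcn : c n = G)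
    (hstep : ∀ i : ℕ, i < n → SigmaStep n faces i (c i) (c (i + 1))) :
    ∃ y : V, G = F.tail ++ [y] ∧ F.head? ≠ some y ∧ IsFlag n faces G ∧
      ∀ z : V, F.head? ≠ some z → IsFlag n faces (F.tail ++ [z]) → z = y := by
  have hn : 0 < n := hΔ.pos hF.2.2
  have hG : IsFlag n faces G := by
    simpa [Nat.sub_add_cancel hn, hcn] using (hstep (n - 1) (by omega)).2.1
  obtain ⟨x, t, rfl⟩ := List.exists_cons_of_length_pos (hF.1.symm ▸ hn)
  have hlen : n = t.length + 1 := by simpa using hF.1.symm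
  obtain ⟨y, rfl, hyx⟩ := exists_eq_append_of_toFinset_take hG.2.1 (hlen ▸ hG.1)
    (fun j hj => hc0 ▸ hcn ▸ toFinset_take_sigmaChain_ne hstep (hG.1 ▸ hj))
    (fun j hj => hc0 ▸ hcn ▸ toFinset_take_sigmaChain_subset hstep (by omega))
  refine ⟨y, rfl, fun h => hyx (Option.some.inj h).symm, hG, fun z hzx hz => ?_⟩
  have hxt := List.nodup_cons.mp hF.2.1
  have hfacet : ∀ {a}, IsFlag n faces (t ++ [a]) → IsFacet n faces (insert a t.toFinset) :=
    fun h => toFinset_append_singleton t _ ▸ h.isFacet_toFinset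
  refine hΔ.eq_of_isFacet_insert (hΔ.mono hF.2.2 (by simp [Finset.subset_insert]))
    (by rw [List.toFinset_card_of_nodup hxt.2]; omega) (by simpa using hxt.1)
    (by simpa using notMem_of_nodup_append_singleton hG.2.1) hyx (fun h => hzx (h ▸ rfl))
    ?_ (hfacet hG) (hfacet hz)
  simpa using hF.isFacet_toFinset
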